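/- arXiv:1610.05030 — 2 statements merged into one kernel-verified Lean document; each statement's English description precedes it below -/
import Mathlib

section
/- Let k be a field of characteristic 2, let g(t) = t^d + α₁ t^{d-1} + … + α_d ∈ k[t] be monic of degree d ≥ 1, set α₀ = β₀ = 1 and define β₁,…,β_d by α_m + α_{m-1}β₁ + … + α₁β_{m-1} + β_m = 0 for 1 ≤ m ≤ d. Let A be the d×d matrix with A_{ij} = β_{j-i} for i ≤ j and 0 otherwise, and B the d×d matrix with B_{ij} = β_{j-i+1} for j ≥ i-1 and 0 otherwise. Then the pair of 2d×2d block matrices ( [[0, A],[Aᵀ, 0]], [[0, B],[Bᵀ, 0]] ) is congruent to the pair ( [[0, I_d],[I_d, 0]], [[0, Φ_g],[Φ_gᵀ, 0]] ), where Φ_g is the companion matrix of g; an explicit congruence is given by S = [[A⁻¹, 0],[0, I_d]]. -/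
open Matrix Finset

theorem stmt_2 (k : Type) [Field k] [CharP k 2] (d : ℕ) (hd : 1 ≤ d)
    (α β : ℕ → k) (hα0 : α 0 = 1) (hβ0 : β 0 = 1)
    (hrec : ∀ m, 1 ≤ m → m ≤ d → ∑ i ∈ Finset.range (m + 1), α (m - i) * β i = 0)
    (A B Φ : Matrix (Fin d) (Fin d) k)
    (hA : ∀ i j, A i j = if (i : ℕ) ≤ (j : ℕ) then β ((j : ℕ) - (i : ℕ)) else 0)
    (hB : ∀ i j, B i j = if (i : ℕ) ≤ (j : ℕ) + 1 then β ((j : ℕ) + 1 - (i : ℕ)) else 0)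
    (hΦ : ∀ i j, Φ i j =
      if (i : ℕ) = (j : ℕ) + 1 then 1
      else if (j : ℕ) = d - 1 then α (d - (i : ℕ)) else 0)
    (S : Matrix (Fin d ⊕ Fin d) (Fin d ⊕ Fin d) k)
    (hS : S = fromBlocks A⁻¹ 0 0 1) :
    IsUnit S ∧
    S * fromBlocks 0 A Aᵀ 0 * Sᵀ = fromBlocks 0 1 1 0 ∧
    S * fromBlocks 0 B Bᵀ 0 * Sᵀ = fromBlocks 0 Φ Φᵀ 0 := by
  have h2 : (2 : k) = 0 := by exact_mod_cast CharP.cast_eq_zero k 2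
  -- A is upper triangular with 1's on the diagonal
  have hAtri : A.BlockTriangular id := by
    intro i j hij
    rw [hA, if_neg]
    simpa using hij
  have hdet : A.det = 1 := by
    rw [Matrix.det_of_upperTriangular hAtri]
    have : ∀ i : Fin d, A i i = 1 := by
      intro i; rw [hA, if_pos le_rfl]; simpa using hβ0
    simp [this]
  have hAinv : A⁻¹ * A = 1 := Matrix.nonsing_inv_mul A (by rw [hdet]; exact isUnit_one)
  -- key recurrence consequence
  have key : ∀ m, 1 ≤ m → m ≤ d → ∑ s ∈ Finset.range m, α (m - s) * β s = β m := by
    intro m h1 h2'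
    have h := hrec m h1 h2'
    rw [Finset.sum_range_succ, Nat.sub_self, hα0, one_mul] at h
    linear_combination h - β m * h2
  -- A * Φ = B
  have hBΦ : A * Φ = B := by
    ext i j
    rw [Matrix.mul_apply, hB]
    by_cases hj : (j : ℕ) = d - 1
    · -- last column
      have hΦval : ∀ l : Fin d, Φ l j = α (d - (l : ℕ)) := by
        intro l
        rw [hΦ, if_neg, if_pos hj]
        have := l.isLt
        omega
      have hcond : (i : ℕ) ≤ (j : ℕ) + 1 := by have := j.isLt; omega
      rw [if_pos hcond]
      have hj1 : (j : ℕ) + 1 = d := by have := j.isLt; omega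
      calc ∑ l : Fin d, A i l * Φ l j
          = ∑ l : Fin d, (if (i : ℕ) ≤ (l : ℕ) then β ((l : ℕ) - (i : ℕ)) * α (d - (l : ℕ)) else 0) := by
            apply Finset.sum_congr rfl
            intro l _
            rw [hA, hΦval]
            split <;> simp
        _ = ∑ l ∈ Finset.range d, (if (i : ℕ) ≤ l then β (l - (i : ℕ)) * α (d - l) else 0) := by
            exact Fin.sum_univ_eq_sum_range (fun l => if (i : ℕ) ≤ l then β (l - (i : ℕ)) * α (d - l) else 0) d
        _ = ∑ l ∈ Finset.Ico (i : ℕ) d, β (l - (i : ℕ)) * α (d - l) := by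
            rw [Finset.range_eq_Ico, ← Finset.sum_Ico_consecutive _ (Nat.zero_le (i : ℕ)) (le_of_lt i.isLt)]
            rw [Finset.sum_ite_of_false (by intro x hx; simp only [Finset.mem_Ico] at hx; omega),
              Finset.sum_ite_of_true (by intro x hx; simp only [Finset.mem_Ico] at hx; omega)]
            simp
        _ = ∑ s ∈ Finset.range (d - (i : ℕ)), β s * α ((d - (i : ℕ)) - s) := by
            rw [Finset.sum_Ico_eq_sum_range]
            apply Finset.sum_congr rfl
            intro s hs
            simp only [Finset.mem_range] at hs
            congr 1
            · congr 1; omega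
            · congr 1; omega
        _ = ∑ s ∈ Finset.range (d - (i : ℕ)), α ((d - (i : ℕ)) - s) * β s := by
            apply Finset.sum_congr rfl; intro s _; ring
        _ = β (d - (i : ℕ)) := by
            apply key <;> have := i.isLt <;> omega
        _ = β ((j : ℕ) + 1 - (i : ℕ)) := by rw [hj1]
    · -- other columns: Φ l j is the indicator of l = j+1
      have hjd : (j : ℕ) + 1 < d := by have := j.isLt; omega
      have : ∑ l : Fin d, A i l * Φ l j = A i ⟨(j : ℕ) + 1, hjd⟩ := by
        rw [Finset.sum_eq_single (⟨(j : ℕ) + 1, hjd⟩ : Fin d)]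
        · rw [hΦ]; simp
        · intro b _ hb
          rw [hΦ, if_neg, if_neg hj, mul_zero]
          intro h
          exact hb (Fin.ext h)
        · intro h; exact absurd (Finset.mem_univ _) h
      rw [this, hA]
  have hAB : A⁻¹ * B = Φ := by
    rw [← hBΦ, ← Matrix.mul_assoc, hAinv, Matrix.one_mul]
  have h1 : Aᵀ * A⁻¹ᵀ = 1 := by rw [← Matrix.transpose_mul, hAinv, Matrix.transpose_one]
  have hT : Bᵀ * A⁻¹ᵀ = Φᵀ := by rw [← Matrix.transpose_mul, hAB]
  subst hS
  refine ⟨?_, ?_, ?_⟩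
  · rw [Matrix.isUnit_iff_isUnit_det, Matrix.det_fromBlocks_zero₂₁, Matrix.det_one, mul_one,
      Matrix.det_nonsing_inv, hdet]
    simp
  · rw [Matrix.fromBlocks_transpose, Matrix.fromBlocks_multiply, Matrix.fromBlocks_multiply]
    simp [hAinv, h1]
  · rw [Matrix.fromBlocks_transpose, Matrix.fromBlocks_multiply, Matrix.fromBlocks_multiply]
    simp [hAB, hT]
end

section
/- Let k be a field of characteristic 2, n ≥ 1, and let A_{+,n} = ( [[0, I_{n+}],[I_{n+}ᵀ, 0]], [[0, I_{n-}],[I_{n-}ᵀ, 0]] ) be the canonical odd-dimensional pair of alternating (2n+1)×(2n+1) matrices. Then for every invertible 2×2 matrix Q = (q_{lk}) over k, the pair A_{+,n} ∘ Q, with components Σ_l q_{l1}A_l and Σ_l q_{l2}A_l where (A₁,A₂) = A_{+,n}, is congruent to A_{+,n} itself. -/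
/-!
Read `k ^ n` and `k ^ (n + 1)` as the polynomials of degree `< n` and `≤ n` through their
coefficient vectors. The columns of `I_{n+}ᵀ` and `I_{n-}ᵀ` are then the coefficients of `X ^ j`
and `X ^ (j + 1)`, so `a I_{n+}ᵀ + c I_{n-}ᵀ` is multiplication by `a + c X`. The matrices `Q` for
which the pencil `(I_{n+}ᵀ, I_{n-}ᵀ) ∘ Q` is strictly equivalent to `(I_{n+}ᵀ, I_{n-}ᵀ)` form a
monoid, and `GL₂(k)` is generated by diagonal matrices and transvections. Diagonal matrices are
absorbed by rescaling the monomials, the swap by reversing them, and the transvection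
`(1, X) ↦ (1, X + β)` by the Taylor shift `p ↦ p (X - β)`. Finally an equivalence
`P (B ∘ Q) R = B` yields the congruence by `diag (Rᵀ, P)` of the symmetric pair built from `B`.
-/

open Matrix Polynomial

/-- The `n × (n+1)` matrix `I_{n+}` with entries `δ_{ij}`. -/
def Iplus (k : Type) [Field k] (n : ℕ) : Matrix (Fin n) (Fin (n + 1)) k :=
  fun i j => if (i : ℕ) = (j : ℕ) then 1 else 0

/-- The `n × (n+1)` matrix `I_{n-}` with entries `δ_{i+1,j}`. -/
def Iminus (k : Type) [Field k] (n : ℕ) : Matrix (Fin n) (Fin (n + 1)) k :=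
  fun i j => if (i : ℕ) + 1 = (j : ℕ) then 1 else 0

section Pencil

variable {K : Type*} [CommRing K] {m n : Type*}

def pencilComp (B : Fin 2 → Matrix m n K) (Q : Matrix (Fin 2) (Fin 2) K) (j : Fin 2) :
    Matrix m n K :=
  ∑ l, Q l j • B l

lemma pencilComp_apply_fin_two (B : Fin 2 → Matrix m n K) (Q : Matrix (Fin 2) (Fin 2) K)
    (j : Fin 2) : pencilComp B Q j = Q 0 j • B 0 + Q 1 j • B 1 :=
  Fin.sum_univ_two _

lemma pencilComp_one (B : Fin 2 → Matrix m n K) : pencilComp B 1 = B := by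
  ext1 j
  simp [pencilComp, one_apply]

lemma pencilComp_mul (B : Fin 2 → Matrix m n K) (Q Q' : Matrix (Fin 2) (Fin 2) K) :
    pencilComp B (Q * Q') = pencilComp (pencilComp B Q) Q' := by
  ext1 j
  simp only [pencilComp, mul_apply, Finset.sum_smul, Finset.smul_sum, smul_smul, mul_comm]
  exact Finset.sum_comm

lemma transpose_pencilComp (B : Fin 2 → Matrix m n K) (Q : Matrix (Fin 2) (Fin 2) K) (j : Fin 2) :
    (pencilComp B Q j)ᵀ = pencilComp (fun l => (B l)ᵀ) Q j := by
  simp [pencilComp]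

lemma pencilComp_fromBlocks (B : Fin 2 → Matrix m n K) (Q : Matrix (Fin 2) (Fin 2) K) (j : Fin 2) :
    pencilComp (fun l => fromBlocks 0 (B l) (B l)ᵀ 0) Q j
      = fromBlocks 0 (pencilComp B Q j) (pencilComp B Q j)ᵀ 0 := by
  simp only [pencilComp_apply_fin_two, fromBlocks_smul, fromBlocks_add, transpose_add,
    transpose_smul, smul_zero, add_zero]

lemma pencilComp_diagonal (B : Fin 2 → Matrix m n K) (D : Fin 2 → K) (j : Fin 2) :
    pencilComp B (diagonal D) j = D j • B j := by
  simp [pencilComp, diagonal_apply, ite_smul]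

variable [Fintype m] [Fintype n]

lemma mul_pencilComp_mul {m' n' : Type*} (P : Matrix m' m K) (B : Fin 2 → Matrix m n K)
    (R : Matrix n n' K) (Q : Matrix (Fin 2) (Fin 2) K) (j : Fin 2) :
    P * pencilComp B Q j * R = pencilComp (fun l => P * B l * R) Q j := by
  simp only [pencilComp, Matrix.mul_sum, Matrix.sum_mul, Matrix.mul_smul, Matrix.smul_mul]

variable [DecidableEq m] [DecidableEq n]

def pencilStabilizer (B : Fin 2 → Matrix m n K) : Submonoid (Matrix (Fin 2) (Fin 2) K) where
  carrier := {Q | ∃ (P : Matrix m m K) (R : Matrix n n K), IsUnit P ∧ IsUnit R ∧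
    ∀ j, P * pencilComp B Q j * R = B j}
  one_mem' := ⟨1, 1, isUnit_one, isUnit_one, by simp [pencilComp_one]⟩
  mul_mem' := by
    rintro Q Q' ⟨P, R, hP, hR, hQ⟩ ⟨P', R', hP', hR', hQ'⟩
    refine ⟨P' * P, R * R', hP'.mul hP, hR.mul hR', fun j => ?_⟩
    calc P' * P * pencilComp B (Q * Q') j * (R * R')
        = P' * (P * pencilComp (pencilComp B Q) Q' j * R) * R' := by
          rw [pencilComp_mul]; simp only [Matrix.mul_assoc]
      _ = P' * pencilComp B Q' j * R' := by rw [mul_pencilComp_mul]; simp only [hQ]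
      _ = B j := hQ' j

lemma exists_congr_fromBlocks_of_mem_pencilStabilizer {B : Fin 2 → Matrix m n K}
    {Q : Matrix (Fin 2) (Fin 2) K} (hQ : Q ∈ pencilStabilizer fun l => (B l)ᵀ) :
    ∃ S : Matrix (m ⊕ n) (m ⊕ n) K, IsUnit S ∧ ∀ j,
      S * pencilComp (fun l => fromBlocks 0 (B l) (B l)ᵀ 0) Q j * Sᵀ
        = fromBlocks 0 (B j) (B j)ᵀ 0 := by
  obtain ⟨P, R, hP, hR, hPR⟩ := hQ
  refine ⟨fromBlocks Rᵀ 0 0 P, isUnit_fromBlocks_zero₂₁.mpr ⟨(isUnit_transpose R).mpr hR, hP⟩,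
    fun j => ?_⟩
  have hPRt : Rᵀ * pencilComp B Q j * Pᵀ = B j := by
    simpa [Matrix.mul_assoc, transpose_pencilComp] using congrArg transpose (hPR j)
  rw [pencilComp_fromBlocks, fromBlocks_transpose, fromBlocks_multiply, fromBlocks_multiply]
  simp [hPRt, transpose_pencilComp, hPR]

end Pencil

lemma mem_of_isUnit_of_transvection_of_diagonal {K ι : Type*} [Field K] [Fintype ι] [DecidableEq ι]
    {M : Submonoid (Matrix ι ι K)} (htransvec : ∀ t : TransvectionStruct ι K, t.toMatrix ∈ M)
    (hdiag : ∀ D : ι → K, (∀ i, D i ≠ 0) → diagonal D ∈ M) {A : Matrix ι ι K} (hA : IsUnit A) :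
    A ∈ M :=
  diagonal_transvection_induction_of_det_ne_zero (· ∈ M) A
    ((isUnit_iff_isUnit_det A).mp hA).ne_zero
    (fun D hD => hdiag D fun i => by
      rw [det_diagonal] at hD
      exact Finset.prod_ne_zero_iff.mp hD i (Finset.mem_univ i))
    htransvec (fun _ _ _ _ => M.mul_mem)

section Taylor

variable {K : Type*} [Field K]

noncomputable def coeffVec (m : ℕ) : K[X] →ₗ[K] Fin m → K :=
  LinearMap.pi fun i => lcoeff K i

@[simp]
lemma coeffVec_apply (m : ℕ) (p : K[X]) (i : Fin m) : coeffVec m p i = p.coeff i :=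
  rfl

lemma coeffVec_X_pow {m : ℕ} (j : Fin m) : coeffVec m (X ^ (j : ℕ)) = Pi.single j (1 : K) := by
  ext i
  simp [coeff_X_pow, Pi.single_apply, Fin.ext_iff]

noncomputable def taylorMatrix (m : ℕ) (β : K) : Matrix (Fin m) (Fin m) K :=
  of fun i j => (taylor β (X ^ (j : ℕ))).coeff i

lemma taylorMatrix_mulVec_coeffVec {m : ℕ} (β : K) {p : K[X]} (hp : p.natDegree < m) :
    taylorMatrix m β *ᵥ coeffVec m p = coeffVec m (taylor β p) := by
  ext i
  conv_rhs => rw [p.as_sum_range' m hp]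
  simp only [mulVec, dotProduct, taylorMatrix, coeffVec_apply, of_apply, map_sum, finsetSum_coeff,
    ← smul_X_eq_monomial, map_smul, coeff_smul, smul_eq_mul, mul_comm (p.coeff _)]
  exact Fin.sum_univ_eq_sum_range (fun j => (taylor β (X ^ j)).coeff i * p.coeff j) m

lemma taylorMatrix_mul (m : ℕ) (β γ : K) :
    taylorMatrix m β * taylorMatrix m γ = taylorMatrix m (β + γ) := by
  refine ext_of_mulVec_single fun j => ?_
  rw [← mulVec_mulVec, ← coeffVec_X_pow, taylorMatrix_mulVec_coeffVec _ (by simp),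
    taylorMatrix_mulVec_coeffVec _ (by simp), taylorMatrix_mulVec_coeffVec _ (by simp),
    taylor_taylor]

lemma taylorMatrix_zero (m : ℕ) : taylorMatrix m (0 : K) = 1 := by
  ext i j
  simp [taylorMatrix, coeff_X_pow, one_apply, Fin.ext_iff]

lemma isUnit_taylorMatrix (m : ℕ) (β : K) : IsUnit (taylorMatrix m β) :=
  ⟨⟨taylorMatrix m β, taylorMatrix m (-β), by simp [taylorMatrix_mul, taylorMatrix_zero],
    by simp [taylorMatrix_mul, taylorMatrix_zero]⟩, rfl⟩

end Taylor

section Kronecker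

variable {k : Type} [Field k] {n : ℕ}

lemma sum_ite_val_eq_coeff {p : k[X]} (hp : p.natDegree < n) (i : ℕ) :
    ∑ j : Fin n, (if (j : ℕ) = i then p.coeff j else 0) = p.coeff i := by
  rw [Fin.sum_univ_eq_sum_range (fun j => if j = i then p.coeff j else 0), Finset.sum_ite_eq']
  exact ite_eq_left_iff.mpr fun hi =>
    (coeff_eq_zero_of_natDegree_lt (by rw [Finset.mem_range] at hi; omega)).symm

lemma Iplus_transpose_mulVec_coeffVec {p : k[X]} (hp : p.natDegree < n) :
    (Iplus k n)ᵀ *ᵥ coeffVec n p = coeffVec (n + 1) p := by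
  ext i
  simp only [mulVec, dotProduct, transpose_apply, Iplus, coeffVec_apply, ite_mul, one_mul,
    zero_mul]
  exact sum_ite_val_eq_coeff hp i

lemma Iminus_transpose_mulVec_coeffVec {p : k[X]} (hp : p.natDegree < n) :
    (Iminus k n)ᵀ *ᵥ coeffVec n p = coeffVec (n + 1) (X * p) := by
  ext ⟨_ | i, hi⟩
  · simp [mulVec, dotProduct, Iminus]
  · simp only [mulVec, dotProduct, transpose_apply, Iminus, coeffVec_apply, ite_mul, one_mul,
      zero_mul, Nat.add_right_cancel_iff, coeff_X_mul]
    exact sum_ite_val_eq_coeff hp i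

def kroneckerPencil (k : Type) [Field k] (n : ℕ) : Fin 2 → Matrix (Fin (n + 1)) (Fin n) k :=
  ![(Iplus k n)ᵀ, (Iminus k n)ᵀ]

/- Scaling `X ^ j` by `(D 0)⁻¹ u ^ j` and `X ^ i` by `u⁻¹ ^ i`, where `u = D 1 / D 0`, turns
`(D 0 · 1, D 1 · X)` back into `(1, X)`. -/
lemma diagonal_mem_pencilStabilizer_kroneckerPencil {D : Fin 2 → k} (hD : ∀ i, D i ≠ 0) :
    diagonal D ∈ pencilStabilizer (kroneckerPencil k n) := by
  set u := D 1 / D 0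
  have hu : u ≠ 0 := div_ne_zero (hD 1) (hD 0)
  refine ⟨diagonal fun i => (u ^ (i : ℕ))⁻¹, diagonal fun j => (D 0)⁻¹ * u ^ (j : ℕ),
    isUnit_diagonal.mpr <| Pi.isUnit_iff.mpr fun i => (inv_ne_zero (pow_ne_zero _ hu)).isUnit,
    isUnit_diagonal.mpr <| Pi.isUnit_iff.mpr fun j =>
      (mul_ne_zero (inv_ne_zero (hD 0)) (pow_ne_zero _ hu)).isUnit,
    fun l => ?_⟩
  ext i j
  rw [pencilComp_diagonal, mul_diagonal, diagonal_mul]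
  fin_cases l
  · simp only [kroneckerPencil, Fin.zero_eta, cons_val_zero, Matrix.smul_apply, transpose_apply,
      Iplus, smul_eq_mul]
    split_ifs with h
    · rw [← h]; field_simp [hD 0]
    · simp
  · simp only [kroneckerPencil, Fin.mk_one, cons_val_one, cons_val_zero, Matrix.smul_apply,
      transpose_apply, Iminus, smul_eq_mul]
    split_ifs with h
    · rw [← h, pow_succ]; field_simp; rfl
    · simp

lemma swap_mem_pencilStabilizer_kroneckerPencil :
    !![0, 1; 1, 0] ∈ pencilStabilizer (kroneckerPencil k n) := by
  have hrev : ∀ m, IsUnit ((Fin.revPerm : Equiv.Perm (Fin m)).permMatrix k) := fun m => by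
    simpa using (Group.isUnit (Fin.revPerm⁻¹ : Equiv.Perm (Fin m))).map (permMatrixHom (R := k))
  refine ⟨Fin.revPerm.permMatrix k, Fin.revPerm.permMatrix k, hrev _, hrev _, fun l => ?_⟩
  rw [PEquiv.toMatrix_toPEquiv_mul, PEquiv.mul_toMatrix_toPEquiv]
  ext i j
  have := i.isLt
  have := j.isLt
  fin_cases l <;>
    simp [pencilComp_apply_fin_two, kroneckerPencil, Iplus, Iminus, Fin.val_rev] <;>
    exact if_congr (by omega) rfl rfl

lemma transvection_mem_pencilStabilizer_kroneckerPencil (β : k) :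
    transvection 0 1 β ∈ pencilStabilizer (kroneckerPencil k n) := by
  have hcomp : pencilComp (kroneckerPencil k n) (transvection 0 1 β)
      = ![(Iplus k n)ᵀ, β • (Iplus k n)ᵀ + (Iminus k n)ᵀ] := by
    ext1 l
    fin_cases l <;> simp [pencilComp_apply_fin_two, transvection, kroneckerPencil]
  refine ⟨taylorMatrix (n + 1) (-β), taylorMatrix n β, isUnit_taylorMatrix _ _,
    isUnit_taylorMatrix _ _, fun l => ext_of_mulVec_single fun j => ?_⟩
  have hdeg : (taylor β (X ^ (j : ℕ))).natDegree < n := by simp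
  rw [hcomp, ← mulVec_mulVec, ← mulVec_mulVec, ← coeffVec_X_pow,
    taylorMatrix_mulVec_coeffVec _ (by simp)]
  fin_cases l
  · simp only [Fin.zero_eta, cons_val_zero, kroneckerPencil]
    rw [Iplus_transpose_mulVec_coeffVec hdeg, taylorMatrix_mulVec_coeffVec _ (by simp),
      taylor_taylor, neg_add_cancel, taylor_zero, Iplus_transpose_mulVec_coeffVec (by simp)]
  · simp only [Fin.mk_one, cons_val_one, cons_val_zero, kroneckerPencil]
    have hX : β • taylor β (X ^ (j : ℕ)) + X * taylor β (X ^ (j : ℕ))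
        = taylor β (X ^ ((j : ℕ) + 1)) := by
      simp only [taylor_X_pow, smul_eq_C_mul]
      ring
    rw [add_mulVec, smul_mulVec, Iplus_transpose_mulVec_coeffVec hdeg,
      Iminus_transpose_mulVec_coeffVec hdeg, ← map_smul, ← map_add, hX,
      taylorMatrix_mulVec_coeffVec _ (by simp), taylor_taylor, neg_add_cancel, taylor_zero,
      Iminus_transpose_mulVec_coeffVec (by simp), pow_succ']

lemma toMatrix_mem_pencilStabilizer_kroneckerPencil (t : TransvectionStruct (Fin 2) k) :
    t.toMatrix ∈ pencilStabilizer (kroneckerPencil k n) := by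
  obtain ⟨i, j, hij, c⟩ := t
  fin_cases i <;> fin_cases j
  · exact absurd rfl hij
  · exact transvection_mem_pencilStabilizer_kroneckerPencil c
  · have hconj : transvection 1 0 c = !![0, 1; 1, 0] * transvection 0 1 c * !![0, 1; 1, 0] := by
      ext a b
      fin_cases a <;> fin_cases b <;>
        simp [transvection, vecMul, dotProduct, mul_apply, Fin.sum_univ_two, one_apply,
          single_apply]
    show transvection 1 0 c ∈ _
    rw [hconj]
    exact mul_mem (mul_mem swap_mem_pencilStabilizer_kroneckerPencil
      (transvection_mem_pencilStabilizer_kroneckerPencil c))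
      swap_mem_pencilStabilizer_kroneckerPencil
  · exact absurd rfl hij

lemma mem_pencilStabilizer_kroneckerPencil {Q : Matrix (Fin 2) (Fin 2) k} (hQ : IsUnit Q) :
    Q ∈ pencilStabilizer (kroneckerPencil k n) :=
  mem_of_isUnit_of_transvection_of_diagonal toMatrix_mem_pencilStabilizer_kroneckerPencil
    (fun _ => diagonal_mem_pencilStabilizer_kroneckerPencil) hQ

end Kronecker

theorem stmt_9_general (k : Type) [Field k] (n : ℕ)
    (Q : Matrix (Fin 2) (Fin 2) k) (hQ : IsUnit Q)
    (A₁ A₂ : Matrix (Fin n ⊕ Fin (n + 1)) (Fin n ⊕ Fin (n + 1)) k)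
    (hA₁ : A₁ = fromBlocks 0 (Iplus k n) (Iplus k n)ᵀ 0)
    (hA₂ : A₂ = fromBlocks 0 (Iminus k n) (Iminus k n)ᵀ 0) :
    ∃ S : Matrix (Fin n ⊕ Fin (n + 1)) (Fin n ⊕ Fin (n + 1)) k, IsUnit S ∧
      S * (Q 0 0 • A₁ + Q 1 0 • A₂) * Sᵀ = A₁ ∧
      S * (Q 0 1 • A₁ + Q 1 1 • A₂) * Sᵀ = A₂ := by
  have hpencil : (fun l => (![Iplus k n, Iminus k n] l)ᵀ) = kroneckerPencil k n := by
    ext1 l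
    fin_cases l <;> rfl
  obtain ⟨S, hS, hcongr⟩ := exists_congr_fromBlocks_of_mem_pencilStabilizer
    (hpencil ▸ mem_pencilStabilizer_kroneckerPencil hQ)
  subst hA₁ hA₂
  exact ⟨S, hS, by simpa [pencilComp_apply_fin_two] using hcongr 0,
    by simpa [pencilComp_apply_fin_two] using hcongr 1⟩

theorem stmt_9 (k : Type) [Field k] [CharP k 2] (n : ℕ) (hn : 1 ≤ n)
    (Q : Matrix (Fin 2) (Fin 2) k) (hQ : IsUnit Q)
    (A₁ A₂ : Matrix (Fin n ⊕ Fin (n + 1)) (Fin n ⊕ Fin (n + 1)) k)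
    (hA₁ : A₁ = fromBlocks 0 (Iplus k n) (Iplus k n)ᵀ 0)
    (hA₂ : A₂ = fromBlocks 0 (Iminus k n) (Iminus k n)ᵀ 0) :
    ∃ S : Matrix (Fin n ⊕ Fin (n + 1)) (Fin n ⊕ Fin (n + 1)) k, IsUnit S ∧
      S * (Q 0 0 • A₁ + Q 1 0 • A₂) * Sᵀ = A₁ ∧
      S * (Q 0 1 • A₁ + Q 1 1 • A₂) * Sᵀ = A₂ :=
  stmt_9_general k n Q hQ A₁ A₂ hA₁ hA₂
end
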